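/- arXiv:gr-qc/0005126 — 2 statements merged into one kernel-verified Lean document; each statement's English description precedes it below -/
import Mathlib

section
/- Define, for a real parameter α > 0 and a positive real constant c, the series Z(α) = ∏_{l ∈ (1/2)ℤ, l ≥ 1/2} (1 - (2l+1)·exp(-αc√(l(l+1))))⁻¹ (product over positive half-integers l). Each factor's denominator is nonzero and the infinite product converges for all real α > α₀ := (ln 2)/(c·√(3)/2), i.e. α > 2ln2/(c√3). -/
/-!
Write `n = 2l + 1`, so that `l (l + 1) = (n² - 1) / 4` and the `l`-th term is
`n · exp (-α c √(n² - 1) / 2)`. Past the threshold this term is `< 1` for every `n ≥ 2` because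
`3 log² n ≤ log² 2 · (n² - 1)` on the integers `n ≥ 2` (equality at `n = 2`, `3⁵ ≤ 2⁸` at `n = 3`,
`n² ≤ 2ⁿ` beyond); it fails for real `n` just above `2`. Since `√(l (l + 1)) ≥ l`, the terms
are dominated by `n e^{-α c n / 2}`, hence summable, and a product `∏ (1 - x)⁻¹` over summable
terms `x < 1` converges because `∑ -log (1 - x)` does.
-/

open Real

theorem Nat.sq_le_two_pow {n : ℕ} (hn : 4 ≤ n) : n ^ 2 ≤ 2 ^ n := by
  induction n, hn using Nat.le_induction with
  | base => norm_num
  | succ n hn ih => rw [pow_succ 2]; nlinarith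

theorem three_mul_log_sq_le {n : ℕ} (hn : 2 ≤ n) :
    3 * log n ^ 2 ≤ log 2 ^ 2 * ((n : ℝ) ^ 2 - 1) := by
  have hlog2 : 0 < log 2 := log_pos one_lt_two
  obtain rfl | rfl | hn4 : n = 2 ∨ n = 3 ∨ 4 ≤ n := by omega
  · norm_num; linarith
  · have h : 5 * log 3 ≤ 8 * log 2 := by
      have h35 : log ((3 : ℝ) ^ 5) ≤ log ((2 : ℝ) ^ 8) := log_le_log (by norm_num) (by norm_num)
      simp only [log_pow] at h35
      push_cast at h35
      linarith
    have hlog3 : 0 ≤ log 3 := log_nonneg (by norm_num)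
    push_cast
    nlinarith [mul_le_mul h h (by positivity) (by positivity)]
  · have hlogn : 0 ≤ log n := log_nonneg (by exact_mod_cast (by omega : 1 ≤ n))
    have h : 2 * log n ≤ n * log 2 := by
      have h2n : log ((n ^ 2 : ℕ) : ℝ) ≤ log ((2 ^ n : ℕ) : ℝ) :=
        log_le_log (by positivity) (by exact_mod_cast Nat.sq_le_two_pow hn4)
      push_cast at h2n
      simpa only [log_pow, Nat.cast_ofNat] using h2n
    have hn4' : (4 : ℝ) ≤ n := by exact_mod_cast hn4
    nlinarith [mul_le_mul h h (by positivity) (by positivity),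
      mul_nonneg (sq_nonneg (log 2)) (by nlinarith : (0 : ℝ) ≤ (n : ℝ) ^ 2 - 4)]

theorem log_le_mul_sqrt_of_two_mul_add_one_eq {l : ℝ} {n : ℕ} (hn : 2 ≤ n) (hl : 2 * l + 1 = n) :
    log n ≤ 2 * log 2 / √3 * √(l * (l + 1)) := by
  have hlogn : 0 ≤ log n := log_nonneg (by exact_mod_cast (by omega : 1 ≤ n))
  have hn' : (2 : ℝ) ≤ n := by exact_mod_cast hn
  have hll : l * (l + 1) = ((n : ℝ) ^ 2 - 1) / 4 := by
    rw [← hl]; ring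
  rw [hll, ← pow_le_pow_iff_left₀ hlogn (by positivity) two_ne_zero, mul_pow, div_pow,
    sq_sqrt zero_le_three, sq_sqrt (by nlinarith)]
  linarith [three_mul_log_sq_le hn]

theorem Real.multipliable_inv_one_sub_of_summable {ι : Type*} {f : ι → ℝ} (hf : Summable f)
    (hf1 : ∀ i, f i < 1) : Multipliable fun i ↦ (1 - f i)⁻¹ := by
  refine multipliable_of_summable_log (fun i ↦ inv_pos.2 (sub_pos.2 (hf1 i))) ?_
  simpa only [log_inv, sub_eq_add_neg] using (summable_log_one_add_of_summable hf.neg).neg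

noncomputable def spinTerm (t l : ℝ) : ℝ := (2 * l + 1) * exp (-t * √(l * (l + 1)))

theorem spinTerm_lt_one {t l : ℝ} {n : ℕ} (ht : 2 * log 2 / √3 < t) (hn : 2 ≤ n)
    (hl : 2 * l + 1 = n) : spinTerm t l < 1 := by
  have hn' : (2 : ℝ) ≤ n := by exact_mod_cast hn
  have hsqrt : 0 < √(l * (l + 1)) := sqrt_pos.2 (by nlinarith)
  have hlog : log (2 * l + 1) < t * √(l * (l + 1)) := by
    rw [hl]
    exact (log_le_mul_sqrt_of_two_mul_add_one_eq hn hl).trans_lt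
      (mul_lt_mul_of_pos_right ht hsqrt)
  rw [spinTerm, ← exp_log (by linarith : 0 < 2 * l + 1), ← exp_add, exp_lt_one_iff]
  linarith

theorem spinTerm_le {t l : ℝ} (ht : 0 ≤ t) (hl : 0 ≤ l) :
    spinTerm t l ≤ (2 * l + 1) * exp (-t * l) := by
  have hl_le : l ≤ √(l * (l + 1)) := le_sqrt_of_sq_le (by nlinarith)
  exact mul_le_mul_of_nonneg_left (exp_le_exp.2 (by nlinarith)) (by linarith)

theorem summable_spinTerm {t : ℝ} (ht : 0 < t) :
    Summable fun j : ℕ ↦ spinTerm t ((j + 1) / 2) := by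
  have hdom : Summable fun j : ℕ ↦
      exp (t / 2) * (((j + 2 : ℕ) : ℝ) ^ 1 * exp (-(t / 2) * (j + 2 : ℕ))) :=
    ((summable_nat_add_iff 2).2 (summable_pow_mul_exp_neg_nat_mul 1 (half_pos ht))).mul_left _
  refine hdom.of_nonneg_of_le (fun j ↦ ?_)
    (fun j ↦ (spinTerm_le ht.le (by positivity)).trans_eq ?_)
  · unfold spinTerm; positivity
  · rw [mul_left_comm, ← exp_add]; push_cast; ring_nf

theorem stmt6 (c α : ℝ) (hc : 0 < c) (hα : 2 * Real.log 2 / (c * Real.sqrt 3) < α) :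
    (∀ j : ℕ,
      1 - ((j : ℝ) + 2) * Real.exp (-α * c *
        Real.sqrt ((((j : ℝ) + 1) / 2) * (((j : ℝ) + 1) / 2 + 1))) ≠ 0) ∧
    Multipliable (fun j : ℕ =>
      (1 - ((j : ℝ) + 2) * Real.exp (-α * c *
        Real.sqrt ((((j : ℝ) + 1) / 2) * (((j : ℝ) + 1) / 2 + 1))))⁻¹) := by
  have ht : 2 * log 2 / √3 < α * c := by
    rw [div_lt_iff₀ (by positivity)] at hα ⊢
    linarith
  have hterm : ∀ j : ℕ, ((j : ℝ) + 2) * exp (-α * c * √(((j + 1) / 2) * ((j + 1) / 2 + 1))) =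
      spinTerm (α * c) ((j + 1) / 2) := fun j ↦ by
    unfold spinTerm; ring_nf
  have hlt : ∀ j : ℕ, spinTerm (α * c) ((j + 1) / 2) < 1 := fun j ↦
    spinTerm_lt_one ht (n := j + 2) (by omega) (by push_cast; ring)
  simp only [hterm]
  exact ⟨fun j ↦ (sub_pos.2 (hlt j)).ne',
    multipliable_inv_one_sub_of_summable (summable_spinTerm (ht.trans_le' (by positivity))) hlt⟩
end

section
/- For positive half-integers l (i.e. l ∈ {1/2, 1, 3/2, …}), the function l ↦ ln(2l+1)/√(l(l+1)) attains its maximum at l = 1/2, where it equals 2·ln 2/√3. -/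
open Real

/-! With `x = 2l + 1` one has `4 l (l + 1) = x² - 1`, so the claim is `log x / √(x² - 1) ≤ log 2 / √3`
for integers `x ≥ 2`. This fails for some real `x ∈ (2, 3)`, so `x = 2` is checked directly and for
`x ≥ 3` the tangent-line bound `e · log x ≤ x` suffices, since `(e · log 2)² > 27/8`. -/

lemma exp_one_mul_log_le {x : ℝ} (hx : 0 < x) : exp 1 * log x ≤ x := by
  simpa [exp_log hx] using exp_one_mul_le_exp (x := log x)

lemma sq_exp_one_mul_log_two_gt : 27 / 8 < (exp 1 * log 2) ^ 2 := by
  have h : (2.7 : ℝ) * 0.69 < exp 1 * log 2 :=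
    mul_lt_mul'' (lt_trans (by norm_num) exp_one_gt_d9) (lt_trans (by norm_num) log_two_gt_d9)
      (by norm_num) (by norm_num)
  nlinarith

lemma three_mul_sq_log_le {x : ℝ} (hx : 3 ≤ x) : 3 * log x ^ 2 ≤ log 2 ^ 2 * (x ^ 2 - 1) := by
  have hsq : exp 1 ^ 2 * log x ^ 2 ≤ x ^ 2 := by
    rw [← mul_pow]
    exact pow_le_pow_left₀ (mul_nonneg (exp_pos 1).le (log_nonneg (by linarith)))
      (exp_one_mul_log_le (by linarith)) 2
  have hconst := sq_exp_one_mul_log_two_gt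
  rw [mul_pow] at hconst
  have hx2 : 9 ≤ x ^ 2 := by nlinarith
  have key : exp 1 ^ 2 * (3 * log x ^ 2) ≤ exp 1 ^ 2 * (log 2 ^ 2 * (x ^ 2 - 1)) := by
    nlinarith [mul_le_mul_of_nonneg_right hconst.le (by linarith : (0 : ℝ) ≤ x ^ 2 - 1)]
  exact le_of_mul_le_mul_left key (by positivity)

lemma log_div_sqrt_sq_sub_one_le {x : ℝ} (hx : 3 ≤ x) :
    log x / √(x ^ 2 - 1) ≤ log 2 / √3 := by
  have hx_pos : 0 < x ^ 2 - 1 := by nlinarith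
  rw [div_le_div_iff₀ (sqrt_pos.mpr hx_pos) (by positivity)]
  refine le_of_pow_le_pow_left₀ two_ne_zero (by positivity) ?_
  rw [mul_pow, mul_pow, sq_sqrt (by norm_num), sq_sqrt hx_pos.le]
  linarith [three_mul_sq_log_le hx]

lemma log_div_sqrt_sq_sub_one_le_of_two_le_nat {n : ℕ} (hn : 2 ≤ n) :
    log n / √((n : ℝ) ^ 2 - 1) ≤ log 2 / √3 := by
  obtain rfl | hn3 := hn.eq_or_lt
  · norm_num
  · exact log_div_sqrt_sq_sub_one_le (by exact_mod_cast hn3)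

lemma log_two_mul_add_one_div_sqrt (l : ℝ) :
    log (2 * l + 1) / √(l * (l + 1)) = 2 * (log (2 * l + 1) / √((2 * l + 1) ^ 2 - 1)) := by
  have h : l * (l + 1) = ((2 * l + 1) ^ 2 - 1) / 2 ^ 2 := by ring
  rw [h, sqrt_div' _ (by positivity), sqrt_sq zero_le_two]
  ring

theorem stmt7 :
    (∀ j : ℕ,
      Real.log (2 * (((j : ℝ) + 1) / 2) + 1) /
          Real.sqrt ((((j : ℝ) + 1) / 2) * (((j : ℝ) + 1) / 2 + 1))
        ≤ 2 * Real.log 2 / Real.sqrt 3) ∧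
    Real.log (2 * (1 / 2 : ℝ) + 1) / Real.sqrt ((1 / 2 : ℝ) * (1 / 2 + 1))
      = 2 * Real.log 2 / Real.sqrt 3 := by
  refine ⟨fun j => ?_, ?_⟩
  · have hx : 2 * (((j : ℝ) + 1) / 2) + 1 = ((j + 2 : ℕ) : ℝ) := by push_cast; ring
    rw [log_two_mul_add_one_div_sqrt, hx, mul_div_assoc]
    exact mul_le_mul_of_nonneg_left
      (log_div_sqrt_sq_sub_one_le_of_two_le_nat (by omega)) zero_le_two
  · rw [log_two_mul_add_one_div_sqrt]
    norm_num [mul_div_assoc]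
end
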